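/- (Necessary condition for correctable erasures on a stabilizer code.) Let F₂ = ZMod 2, let V = (Fin n → F₂) × (Fin n → F₂) with the symplectic form ω((a,b),(a',b')) = a·b' + a'·b, and let S ≤ V be a self-orthogonal subspace (S ≤ S^⊥, i.e., a stabilizer code). If the erasure pattern E ⊆ Fin n is correctable, i.e., V_E ⊓ S^⊥ ≤ S (every zero-syndrome Pauli error supported in E is a stabilizer), then 2·|E| ≤ finrank(S) + finrank(π_E(S)) − finrank(π_Ē(S)). (In the paper's matrix notation: 2|E| ≤ rank(H) + rank(H_E) − rank(H_Ē).) -/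

import Mathlib

open Module

/-- The `F₂`-vector space `(Fin n → F₂) × (Fin n → F₂)` representing the `n`-qubit
Pauli group modulo phases: `(a, b)` represents `X^a Z^b`. -/
abbrev PauliSp (n : ℕ) := (Fin n → ZMod 2) × (Fin n → ZMod 2)

/-- The symplectic bilinear form `ω((a,b),(a',b')) = a·b' + a'·b` on `PauliSp n`. -/
def omegaBilin (n : ℕ) : PauliSp n →ₗ[ZMod 2] PauliSp n →ₗ[ZMod 2] ZMod 2 :=
  LinearMap.mk₂ (ZMod 2)
    (fun v w => (∑ i, v.1 i * w.2 i) + (∑ i, w.1 i * v.2 i))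
    (by
      intro v v' w
      simp [add_mul, mul_add, Finset.sum_add_distrib]
      ring)
    (by
      intro c v w
      simp [smul_eq_mul, mul_assoc, mul_left_comm, Finset.mul_sum, mul_add])
    (by
      intro v w w'
      simp [add_mul, mul_add, Finset.sum_add_distrib]
      ring)
    (by
      intro c v w
      simp [smul_eq_mul, mul_assoc, mul_left_comm, Finset.mul_sum, mul_add])

/-- The symplectic complement `W^⊥ = {v | ω(v, w) = 0 for all w ∈ W}` of a subspace `W`,
corresponding to the centralizer in the Pauli group. -/
def sperp {n : ℕ} (W : Submodule (ZMod 2) (PauliSp n)) : Submodule (ZMod 2) (PauliSp n) where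
  carrier := {v | ∀ w ∈ W, omegaBilin n v w = 0}
  zero_mem' := by intro w hw; simp
  add_mem' := by
    intro a b ha hb w hw
    rw [map_add, LinearMap.add_apply, ha w hw, hb w hw, add_zero]
  smul_mem' := by
    intro c a ha w hw
    rw [map_smul, LinearMap.smul_apply, ha w hw, smul_zero]

/-- `V_E`: the subspace of Pauli errors supported in the erasure pattern `E`. -/
def suppIn (n : ℕ) (E : Finset (Fin n)) : Submodule (ZMod 2) (PauliSp n) where
  carrier := {v | ∀ i, i ∉ E → v.1 i = 0 ∧ v.2 i = 0}
  zero_mem' := by intro i _; simp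
  add_mem' := by
    intro a b ha hb i hi
    have h1 := ha i hi; have h2 := hb i hi
    constructor
    · simp [h1.1, h2.1]
    · simp [h1.2, h2.2]
  smul_mem' := by
    intro c a ha i hi
    have h := ha i hi
    constructor
    · simp [h.1]
    · simp [h.2]

/-- `π_E`: the coordinate projection onto the qubits in `E`. -/
def projE (n : ℕ) (E : Finset (Fin n)) :
    PauliSp n →ₗ[ZMod 2] ((E → ZMod 2) × (E → ZMod 2)) :=
  LinearMap.prodMap
    (LinearMap.funLeft (ZMod 2) (ZMod 2) (fun i : E => (i : Fin n)))
    (LinearMap.funLeft (ZMod 2) (ZMod 2) (fun i : E => (i : Fin n)))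

section Aux

variable {n : ℕ}

lemma omegaBilin_apply (v w : PauliSp n) :
    omegaBilin n v w = (∑ i, v.1 i * w.2 i) + (∑ i, w.1 i * v.2 i) := rfl

lemma omega_symm (v w : PauliSp n) : omegaBilin n v w = omegaBilin n w v := by
  rw [omegaBilin_apply, omegaBilin_apply, add_comm]

lemma omega_isRefl : LinearMap.BilinForm.IsRefl (omegaBilin n) := by
  unfold LinearMap.BilinForm.IsRefl LinearMap.IsRefl
  intro v w h; rwa [omega_symm]

lemma sperp_eq (W : Submodule (ZMod 2) (PauliSp n)) :
    sperp W = LinearMap.BilinForm.orthogonal (omegaBilin n) W := by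
  ext v
  constructor
  · intro h w hw; rw [omega_symm]; exact h w hw
  · intro h w hw; rw [omega_symm]; exact h w hw

lemma omega_singleX (i : Fin n) (v : PauliSp n) :
    omegaBilin n v (Pi.single i 1, 0) = v.2 i := by
  simp [omegaBilin_apply, Pi.single_apply, ite_mul, Finset.sum_ite_eq']

lemma omega_singleZ (i : Fin n) (v : PauliSp n) :
    omegaBilin n v (0, Pi.single i 1) = v.1 i := by
  simp [omegaBilin_apply, Pi.single_apply, mul_ite, Finset.sum_ite_eq']

lemma omega_nondegenerate : LinearMap.BilinForm.Nondegenerate (omegaBilin n) := by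
  unfold LinearMap.BilinForm.Nondegenerate
  have hL : ∀ v : PauliSp n, (∀ w, omegaBilin n v w = 0) → v = 0 := by
    intro v hv
    ext i
    · simpa using (omega_singleZ i v).symm.trans (hv (0, Pi.single i 1))
    · simpa using (omega_singleX i v).symm.trans (hv (Pi.single i 1, 0))
  exact ⟨hL, fun v hv => hL v (fun w => by rw [omega_symm]; exact hv w)⟩

lemma ker_projE (F : Finset (Fin n)) :
    LinearMap.ker (projE n F) = suppIn n Fᶜ := by
  ext v
  simp only [LinearMap.mem_ker, projE, LinearMap.prodMap_apply, Prod.ext_iff,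
    LinearMap.funLeft_apply, Prod.fst_zero, Prod.snd_zero, funext_iff, Pi.zero_apply,
    suppIn, Submodule.mem_mk, AddSubmonoid.mem_mk, AddSubsemigroup.mem_mk, Set.mem_setOf_eq,
    Finset.mem_compl, not_not]
  constructor
  · rintro ⟨h1, h2⟩ i hi
    exact ⟨h1 ⟨i, hi⟩, h2 ⟨i, hi⟩⟩
  · intro h
    exact ⟨fun i => (h i i.2).1, fun i => (h i i.2).2⟩

lemma projE_surjective (F : Finset (Fin n)) : Function.Surjective (projE n F) := by
  have h : Function.Surjective
      (LinearMap.funLeft (ZMod 2) (ZMod 2) (fun i : F => (i : Fin n))) :=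
    LinearMap.funLeft_surjective_of_injective _ _ _ Subtype.coe_injective
  rw [projE, LinearMap.coe_prodMap]
  exact h.prodMap h

lemma finrank_pauliSp : finrank (ZMod 2) (PauliSp n) = 2 * n := by
  rw [Module.finrank_prod, Module.finrank_fintype_fun_eq_card, Fintype.card_fin]
  ring

lemma finrank_target (F : Finset (Fin n)) :
    finrank (ZMod 2) ((F → ZMod 2) × (F → ZMod 2)) = 2 * F.card := by
  rw [Module.finrank_prod, Module.finrank_fintype_fun_eq_card, Fintype.card_coe]
  ring

lemma finrank_suppIn_compl (F : Finset (Fin n)) :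
    finrank (ZMod 2) (suppIn n Fᶜ) + 2 * F.card = 2 * n := by
  have h := LinearMap.finrank_range_add_finrank_ker (projE n F)
  rw [LinearMap.range_eq_top.mpr (projE_surjective F), finrank_top, ker_projE,
    finrank_target, finrank_pauliSp] at h
  omega

lemma finrank_map_add_inf_ker {V W : Type*} [AddCommGroup V] [Module (ZMod 2) V]
    [AddCommGroup W] [Module (ZMod 2) W] [FiniteDimensional (ZMod 2) V]
    (f : V →ₗ[ZMod 2] W) (S : Submodule (ZMod 2) V) :
    finrank (ZMod 2) (S.map f) + finrank (ZMod 2) (S ⊓ LinearMap.ker f : Submodule (ZMod 2) V)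
      = finrank (ZMod 2) S := by
  have h := LinearMap.finrank_range_add_finrank_ker (f.domRestrict S)
  rw [LinearMap.range_domRestrict] at h
  have hker : LinearMap.ker (f.domRestrict S) = (LinearMap.ker f).comap S.subtype := by
    rw [LinearMap.domRestrict, LinearMap.ker_comp]
  have h2 : finrank (ZMod 2) (LinearMap.ker (f.domRestrict S))
      = finrank (ZMod 2) (S ⊓ LinearMap.ker f : Submodule (ZMod 2) V) := by
    rw [← Submodule.finrank_map_subtype_eq S, hker, Submodule.map_comap_subtype]
  rw [h2] at h
  exact h

lemma orth_suppIn_compl_le (E : Finset (Fin n)) :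
    LinearMap.BilinForm.orthogonal (omegaBilin n) (suppIn n Eᶜ) ≤ suppIn n E := by
  intro v hv i hi
  have hiE : i ∈ Eᶜ := Finset.mem_compl.mpr hi
  have hX : (Pi.single i 1, (0 : Fin n → ZMod 2)) ∈ suppIn n Eᶜ := by
    intro j hj
    have : j ≠ i := fun h => hj (h ▸ hiE)
    exact ⟨Pi.single_eq_of_ne this 1, rfl⟩
  have hZ : ((0 : Fin n → ZMod 2), Pi.single i 1) ∈ suppIn n Eᶜ := by
    intro j hj
    have : j ≠ i := fun h => hj (h ▸ hiE)
    exact ⟨rfl, Pi.single_eq_of_ne this 1⟩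
  constructor
  · have := hv _ hZ
    rwa [omega_symm, omega_singleZ] at this
  · have := hv _ hX
    rwa [omega_symm, omega_singleX] at this

end Aux

/-- Necessary condition for correctable erasures on a stabilizer code: if `S` is
self-orthogonal (`S ≤ S^⊥`) and every zero-syndrome Pauli error supported in `E` is a
stabilizer (`V_E ⊓ S^⊥ ≤ S`), then
`2·|E| ≤ finrank S + finrank (π_E S) − finrank (π_Ē S)`. -/
theorem correctable_erasure_stabilizer_necessary (n : ℕ) (E : Finset (Fin n))
    (S : Submodule (ZMod 2) (PauliSp n)) (hself : S ≤ sperp S)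
    (hcorr : suppIn n E ⊓ sperp S ≤ S) :
    2 * E.card ≤
      finrank (ZMod 2) ↥S + finrank (ZMod 2) ↥(S.map (projE n E)) -
        finrank (ZMod 2) ↥(S.map (projE n Eᶜ)) := by
  classical
  set B := omegaBilin n
  have hR : LinearMap.BilinForm.IsRefl B := omega_isRefl
  have hN : LinearMap.BilinForm.Nondegenerate B := omega_nondegenerate
  -- rank-nullity facts
  have hE : finrank (ZMod 2) (S.map (projE n E))
      + finrank (ZMod 2) (S ⊓ suppIn n Eᶜ : Submodule (ZMod 2) (PauliSp n))
      = finrank (ZMod 2) S := by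
    have := finrank_map_add_inf_ker (projE n E) S
    rwa [ker_projE] at this
  have hEc : finrank (ZMod 2) (S.map (projE n Eᶜ))
      + finrank (ZMod 2) (S ⊓ suppIn n E : Submodule (ZMod 2) (PauliSp n))
      = finrank (ZMod 2) S := by
    have := finrank_map_add_inf_ker (projE n Eᶜ) S
    rwa [ker_projE, compl_compl] at this
  -- the key containment
  have hkey : LinearMap.BilinForm.orthogonal B (suppIn n Eᶜ ⊔ S) ≤ S ⊓ suppIn n E := by
    intro v hv
    have h1 : v ∈ suppIn n E :=
      orth_suppIn_compl_le E (LinearMap.BilinForm.orthogonal_le le_sup_left hv)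
    have h2 : v ∈ sperp S := by
      rw [sperp_eq]
      exact LinearMap.BilinForm.orthogonal_le le_sup_right hv
    exact ⟨hcorr ⟨h1, h2⟩, h1⟩
  have hdimkey : finrank (ZMod 2) (LinearMap.BilinForm.orthogonal B (suppIn n Eᶜ ⊔ S))
      ≤ finrank (ZMod 2) (S ⊓ suppIn n E : Submodule (ZMod 2) (PauliSp n)) :=
    Submodule.finrank_mono hkey
  have horth : finrank (ZMod 2) (LinearMap.BilinForm.orthogonal B (suppIn n Eᶜ ⊔ S))
      = finrank (ZMod 2) (PauliSp n)
        - finrank (ZMod 2) (suppIn n Eᶜ ⊔ S : Submodule (ZMod 2) (PauliSp n)) :=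
    LinearMap.BilinForm.finrank_orthogonal hN _
  have hsup : finrank (ZMod 2) (suppIn n Eᶜ ⊔ S : Submodule (ZMod 2) (PauliSp n))
      + finrank (ZMod 2) (suppIn n Eᶜ ⊓ S : Submodule (ZMod 2) (PauliSp n))
      = finrank (ZMod 2) (suppIn n Eᶜ) + finrank (ZMod 2) S :=
    Submodule.finrank_sup_add_finrank_inf_eq _ _
  have hsupp : finrank (ZMod 2) (suppIn n Eᶜ) + 2 * E.card = 2 * n :=
    finrank_suppIn_compl E
  have hV : finrank (ZMod 2) (PauliSp n) = 2 * n := finrank_pauliSp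
  have hle : finrank (ZMod 2) (suppIn n Eᶜ ⊔ S : Submodule (ZMod 2) (PauliSp n))
      ≤ finrank (ZMod 2) (PauliSp n) := Submodule.finrank_le _
  have hcomm : (suppIn n Eᶜ ⊓ S : Submodule (ZMod 2) (PauliSp n)) = S ⊓ suppIn n Eᶜ :=
    inf_comm _ _
  rw [hcomm] at hsup
  omega
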